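/- For all natural numbers n and m: ∫_ℝ fₙ(x) · fₘ(x) · exp(x²/2) dx = 0 if n ≠ m, and ∫_ℝ fₙ(x)² · exp(x²/2) dx = n! · √(2π), where fₙ denotes the n-th derivative of x ↦ exp(−x²/2). That is, the Hermite functions fₙ(x) = e^{−x²/2}Hₙ(x) are orthogonal in L²(e^{x²/2} dx). -/

import Mathlib

/-!
Since `fₘ(x) e^{x²/2} = (-1)ᵐ Hₘ(x)` with `Hₘ` monic of degree `m`, the integral
`∫ fₙ fₘ e^{x²/2}` equals `(-1)ᵐ ∫ Hₘ fₙ`. Integrating by parts `n` times (there are no boundary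
terms, polynomials times Gaussians being integrable) moves all derivatives onto `Hₘ` and gives
`(-1)ⁿ⁺ᵐ ∫ Hₘ⁽ⁿ⁾(x) e^{-x²/2} dx`. For `m < n` the integrand vanishes; for `m = n` it is
`n! e^{-x²/2}`, whose integral is `n! √(2π)`.
-/

open MeasureTheory Real Polynomial

/-- `gaussDeriv n` is the `n`-th derivative of `x ↦ exp (-x²/2)`; it equals
`e^{-x²/2} Hₙ(x)` where `Hₙ` is (a multiple of) the probabilists' Hermite polynomial. -/
noncomputable def gaussDeriv (n : ℕ) : ℝ → ℝ :=
  iteratedDeriv n (fun x : ℝ => Real.exp (-(x ^ 2) / 2))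

theorem Polynomial.Monic.iterate_derivative_natDegree {R : Type*} [Semiring R]
    {p : R[X]} (hp : p.Monic) : derivative^[p.natDegree] p = C (p.natDegree.factorial : R) := by
  rw [eq_C_of_natDegree_eq_zero (Nat.eq_zero_of_le_zero <|
    (natDegree_iterate_derivative p _).trans (Nat.sub_self _).le), coeff_iterate_derivative,
    zero_add, Nat.descFactorial_self, hp.coeff_natDegree, nsmul_one]

theorem integrable_pow_mul_exp_neg_mul_sq {b : ℝ} (hb : 0 < b) (k : ℕ) :
    Integrable fun x : ℝ => x ^ k * exp (-b * x ^ 2) := by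
  simpa only [rpow_natCast] using
    integrable_rpow_mul_exp_neg_mul_sq hb (s := k) (by linarith [k.cast_nonneg (α := ℝ)])

theorem integrable_eval_mul_exp_neg_mul_sq {b : ℝ} (hb : 0 < b) (p : ℝ[X]) :
    Integrable fun x : ℝ => p.eval x * exp (-b * x ^ 2) := by
  induction p using Polynomial.induction_on' with
  | add p q hp hq =>
    simp only [eval_add, add_mul]
    exact hp.add hq
  | monomial k a =>
    simpa only [eval_monomial, mul_assoc] using
      (integrable_pow_mul_exp_neg_mul_sq hb k).const_mul a

theorem integral_exp_neg_sq_div_two : ∫ x : ℝ, exp (-(x ^ 2) / 2) = √(2 * π) := by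
  have h := integral_gaussian (1 / 2)
  simp only [neg_mul, one_div, ← div_eq_inv_mul, div_inv_eq_mul] at h
  simp only [neg_div]
  rw [h, mul_comm]

noncomputable abbrev hermiteReal (n : ℕ) : ℝ[X] := (hermite n).map (algebraMap ℤ ℝ)

theorem natDegree_hermiteReal (n : ℕ) : (hermiteReal n).natDegree = n := by
  rw [(hermite_monic n).natDegree_map, natDegree_hermite]

theorem iterate_derivative_hermiteReal_self (n : ℕ) :
    derivative^[n] (hermiteReal n) = C (n.factorial : ℝ) := by
  simpa only [natDegree_hermiteReal] using
    ((hermite_monic n).map (algebraMap ℤ ℝ)).iterate_derivative_natDegree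

theorem gaussDeriv_eq (n : ℕ) (x : ℝ) :
    gaussDeriv n x = (-1) ^ n * (hermiteReal n).eval x * exp (-(x ^ 2) / 2) := by
  simp only [gaussDeriv, iteratedDeriv_eq_iterate, neg_div,
    deriv_gaussian_eq_hermite_mul_gaussian, eval_map_algebraMap]

theorem hasDerivAt_gaussDeriv (k : ℕ) (x : ℝ) :
    HasDerivAt (gaussDeriv k) (gaussDeriv (k + 1) x) x := by
  have hsmooth : ContDiff ℝ ⊤ fun x : ℝ => exp (-(x ^ 2) / 2) := by fun_prop
  rw [gaussDeriv, gaussDeriv, iteratedDeriv_succ]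
  exact (hsmooth.differentiable_iteratedDeriv k (WithTop.coe_lt_top _) x).hasDerivAt

theorem integrable_eval_mul_gaussDeriv (p : ℝ[X]) (k : ℕ) :
    Integrable fun x : ℝ => p.eval x * gaussDeriv k x := by
  have h := (integrable_eval_mul_exp_neg_mul_sq (b := 1 / 2) (by norm_num)
    (p * hermiteReal k)).const_mul ((-1) ^ k)
  convert h using 2 with x
  rw [gaussDeriv_eq, eval_mul]
  ring_nf

theorem integral_eval_mul_gaussDeriv_succ (p : ℝ[X]) (k : ℕ) :
    ∫ x : ℝ, p.eval x * gaussDeriv (k + 1) x =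
      -∫ x : ℝ, (derivative p).eval x * gaussDeriv k x :=
  integral_mul_deriv_eq_deriv_mul_of_integrable
    (fun x _ => p.hasDerivAt x) (fun x _ => hasDerivAt_gaussDeriv k x)
    (integrable_eval_mul_gaussDeriv p (k + 1)) (integrable_eval_mul_gaussDeriv (derivative p) k)
    (integrable_eval_mul_gaussDeriv p k)

theorem integral_eval_mul_gaussDeriv (p : ℝ[X]) (n : ℕ) :
    ∫ x : ℝ, p.eval x * gaussDeriv n x =
      (-1) ^ n * ∫ x : ℝ, (derivative^[n] p).eval x * exp (-(x ^ 2) / 2) := by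
  induction n generalizing p with
  | zero => simp [gaussDeriv]
  | succ n ih =>
    rw [integral_eval_mul_gaussDeriv_succ, ih, ← Function.iterate_succ_apply, pow_succ]
    ring

theorem integral_gaussDeriv_mul_gaussDeriv_mul_exp (n m : ℕ) :
    ∫ x : ℝ, gaussDeriv n x * gaussDeriv m x * exp (x ^ 2 / 2) =
      (-1) ^ (n + m) *
        ∫ x : ℝ, (derivative^[n] (hermiteReal m)).eval x * exp (-(x ^ 2) / 2) := by
  have hcancel (x : ℝ) : exp (-(x ^ 2) / 2) * exp (x ^ 2 / 2) = 1 := by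
    rw [← exp_add, neg_div, neg_add_cancel, exp_zero]
  have hintegrand (x : ℝ) : gaussDeriv n x * gaussDeriv m x * exp (x ^ 2 / 2) =
      (-1) ^ m * ((hermiteReal m).eval x * gaussDeriv n x) := by
    rw [gaussDeriv_eq m x]
    linear_combination ((-1) ^ m * (hermiteReal m).eval x * gaussDeriv n x) * hcancel x
  simp_rw [hintegrand]
  rw [integral_const_mul, integral_eval_mul_gaussDeriv, pow_add]
  ring

theorem integral_gaussDeriv_mul_gaussDeriv_mul_exp_of_lt {n m : ℕ} (h : m < n) :
    ∫ x : ℝ, gaussDeriv n x * gaussDeriv m x * exp (x ^ 2 / 2) = 0 := by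
  rw [integral_gaussDeriv_mul_gaussDeriv_mul_exp,
    iterate_derivative_eq_zero ((natDegree_hermiteReal m).trans_lt h)]
  simp

/-- The Hermite functions `fₙ(x) = e^{−x²/2} Hₙ(x)` are orthogonal in
`L²(e^{x²/2} dx)`: `∫ fₙ fₘ e^{x²/2} dx = 0` for `n ≠ m`, and
`∫ fₙ² e^{x²/2} dx = n! √(2π)`. -/
theorem gaussDeriv_orthogonal (n m : ℕ) :
    (n ≠ m → ∫ x : ℝ, gaussDeriv n x * gaussDeriv m x * Real.exp (x ^ 2 / 2) = 0) ∧
    ∫ x : ℝ, (gaussDeriv n x) ^ 2 * Real.exp (x ^ 2 / 2) =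
      n.factorial * Real.sqrt (2 * Real.pi) := by
  refine ⟨fun hnm => ?_, ?_⟩
  · rcases hnm.lt_or_gt with h | h
    · simpa only [mul_comm (gaussDeriv n _)] using
        integral_gaussDeriv_mul_gaussDeriv_mul_exp_of_lt h
    · exact integral_gaussDeriv_mul_gaussDeriv_mul_exp_of_lt h
  · simp_rw [sq (gaussDeriv n _)]
    rw [integral_gaussDeriv_mul_gaussDeriv_mul_exp, iterate_derivative_hermiteReal_self]
    simp only [eval_C, integral_const_mul, integral_exp_neg_sq_div_two, ← two_mul, pow_mul,
      neg_one_sq, one_pow, one_mul]
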